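/- Let K ≥ 2 and M ≥ 0 be real/natural parameters, and let D = {d ∈ ℝ^K : d_i ≥ 0 for all i, and d_i + d_j ≤ M for all i ≠ j} be the claimed degrees-of-freedom region of the K-user interference channel with M antennas at each node. Then D is exactly the set of nonnegative points that are componentwise dominated by some point in the convex hull of the finite set consisting of all coordinate permutations of the point (M, 0, …, 0), the point (M/2, M/2, …, M/2), and the origin. That is, d ∈ D if and only if d ≥ 0 componentwise and there exists y in the convex hull of {σ·(M,0,…,0) : σ a permutation of the K coordinates} ∪ {(M/2,…,M/2), 0} with d_i ≤ y_i for every coordinate i. -/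

import Mathlib

/-!
Every vertex satisfies `x i + x j ≤ M` for `i ≠ j`, a convex condition, so the whole hull does,
and so does everything it dominates. Conversely, if `d i` is the largest coordinate of `d`, every
other coordinate is at most `q = min (d i) (M - d i)`, and the point `p = d i` at `i`, `q` elsewhere,
is `(p - q)/M • M eᵢ + 2q/M • (M/2, …, M/2)`: a subconvex combination of vertices, hence a convex
one because the origin is a vertex too.
-/

open Set

theorem Convex.smul_add_smul_mem_of_zero_mem {E : Type*} [AddCommGroup E] [Module ℝ E]
    {s : Set E} (hs : Convex ℝ s) (h0 : (0 : E) ∈ s) {u w : E} (hu : u ∈ s) (hw : w ∈ s)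
    {a b : ℝ} (ha : 0 ≤ a) (hb : 0 ≤ b) (hab : a + b ≤ 1) : a • u + b • w ∈ s := by
  have hc : 0 ≤ 1 - a - b := by linarith
  simpa [Fin.sum_univ_three] using
    hs.sum_mem (t := Finset.univ) (w := ![a, b, 1 - a - b]) (z := ![u, w, 0])
      (by simp [Fin.forall_fin_succ, ha, hb, hc]) (by simp [Fin.sum_univ_three])
      (by simp [Fin.forall_fin_succ, hu, hw, h0])

theorem convex_setOf_add_le {ι : Type*} (i j : ι) (M : ℝ) :
    Convex ℝ {x : ι → ℝ | x i + x j ≤ M} :=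
  convex_halfSpace_le (f := fun x : ι → ℝ => x i + x j)
    ⟨fun x y => by simp [add_add_add_comm], fun c x => by simp [mul_add]⟩ M

theorem setOf_exists_perm_ite_eq_range_single {ι : Type*} [DecidableEq ι] (z : ι) (M : ℝ) :
    {x : ι → ℝ | ∃ σ : Equiv.Perm ι, x = fun i => if σ i = z then M else 0} =
      range fun k => Pi.single k M := by
  ext x
  constructor
  · rintro ⟨σ, rfl⟩
    refine ⟨σ.symm z, funext fun i => ?_⟩
    simp [Pi.single_apply, Equiv.eq_symm_apply]
  · rintro ⟨k, rfl⟩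
    refine ⟨Equiv.swap k z, funext fun i => ?_⟩
    simp [Pi.single_apply, Equiv.swap_apply_eq_iff]

def dofVertices (ι : Type*) [DecidableEq ι] (M : ℝ) : Set (ι → ℝ) :=
  (range fun k => Pi.single k M) ∪ {fun _ => M / 2, 0}

section DofVertices

variable {ι : Type*} [DecidableEq ι] {M : ℝ}

theorem add_le_of_mem_convexHull_dofVertices (hM : 0 ≤ M) {y : ι → ℝ}
    (hy : y ∈ convexHull ℝ (dofVertices ι M)) {i j : ι} (hij : i ≠ j) : y i + y j ≤ M := by
  refine convexHull_min (fun x hx => ?_) (convex_setOf_add_le i j M) hy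
  rcases hx with ⟨k, rfl⟩ | rfl | rfl
  · by_cases hi : i = k
    · subst hi; simp [hij.symm]
    · by_cases hj : j = k
      · subst hj; simp [hi]
      · simp [hi, hj, hM]
  · simp
  · simpa using hM

theorem update_const_mem_convexHull_dofVertices (i : ι) {p q : ℝ} (hq : 0 ≤ q) (hqp : q ≤ p)
    (hpq : p + q ≤ M) : Function.update (fun _ => q) i p ∈ convexHull ℝ (dofVertices ι M) := by
  have h0 : (0 : ι → ℝ) ∈ convexHull ℝ (dofVertices ι M) :=
    subset_convexHull ℝ _ (Or.inr (by simp))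
  rcases (show 0 ≤ M by linarith).eq_or_lt with rfl | hM
  · obtain rfl : p = 0 := by linarith
    obtain rfl : q = 0 := by linarith
    convert h0 using 1
    ext
    simp
  have hcomb : Function.update (fun _ => q) i p =
      ((p - q) / M) • Pi.single i M + (2 * q / M) • fun _ : ι => M / 2 := by
    ext k
    by_cases hk : k = i
    · subst hk
      simp only [Function.update_self, Pi.add_apply, Pi.smul_apply, Pi.single_eq_same,
        smul_eq_mul]
      field_simp
      ring
    · simp only [ne_eq, hk, not_false_eq_true, Function.update_of_ne, Pi.add_apply,
        Pi.smul_apply, Pi.single_eq_of_ne, smul_eq_mul, mul_zero, zero_add]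
      field_simp
  rw [hcomb]
  refine (convex_convexHull ℝ _).smul_add_smul_mem_of_zero_mem h0
    (subset_convexHull ℝ _ (Or.inl ⟨i, rfl⟩)) (subset_convexHull ℝ _ (Or.inr (by simp)))
    (div_nonneg (by linarith) hM.le) (div_nonneg (by linarith) hM.le) ?_
  rw [← add_div, div_le_one hM]
  linarith

theorem exists_mem_convexHull_dofVertices_le [Fintype ι] [Nontrivial ι] {d : ι → ℝ}
    (hd : ∀ i, 0 ≤ d i) (hsum : ∀ i j, i ≠ j → d i + d j ≤ M) :
    ∃ y ∈ convexHull ℝ (dofVertices ι M), ∀ i, d i ≤ y i := by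
  obtain ⟨i, -, hi⟩ := Finset.univ.exists_max_image d Finset.univ_nonempty
  obtain ⟨j, hji⟩ := exists_ne i
  set q := min (d i) (M - d i)
  refine ⟨Function.update (fun _ => q) i (d i),
    update_const_mem_convexHull_dofVertices i ?_ (min_le_left _ _) ?_, fun k => ?_⟩
  · have := hsum i j hji.symm
    exact le_min (hd i) (by linarith [hd j])
  · linarith [min_le_right (d i) (M - d i)]
  · by_cases hk : k = i
    · subst hk; simp
    · have := hsum i k (Ne.symm hk)
      rw [Function.update_of_ne hk]
      exact le_min (hi k (Finset.mem_univ k)) (by linarith)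

end DofVertices

/-- The region D = {d : d_i ≥ 0, d_i + d_j ≤ M for i ≠ j} is exactly the set
of nonnegative points componentwise dominated by some point of the convex hull of the
coordinate permutations of (M,0,…,0), the symmetric point (M/2,…,M/2), and the origin. -/
theorem dof_region_eq_dominated_hull (K : ℕ) (hK : 2 ≤ K) (M : ℝ) (hM : 0 ≤ M)
    (D : Set (Fin K → ℝ))
    (hD : D = {d | (∀ i, 0 ≤ d i) ∧ ∀ i j, i ≠ j → d i + d j ≤ M})
    (V : Set (Fin K → ℝ))
    (hV : V = {x | ∃ σ : Equiv.Perm (Fin K),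
          x = fun i => if σ i = (⟨0, by omega⟩ : Fin K) then M else 0}
        ∪ {fun _ => M / 2, 0}) :
    ∀ d : Fin K → ℝ,
      d ∈ D ↔ ((∀ i, 0 ≤ d i) ∧ ∃ y ∈ convexHull ℝ V, ∀ i, d i ≤ y i) := by
  have : Nontrivial (Fin K) := Fin.nontrivial_iff_two_le.mpr hK
  rw [setOf_exists_perm_ite_eq_range_single] at hV
  change V = dofVertices (Fin K) M at hV
  subst hD hV
  intro d
  constructor
  · rintro ⟨hd, hsum⟩
    exact ⟨hd, exists_mem_convexHull_dofVertices_le hd hsum⟩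
  · rintro ⟨hd, y, hy, hdy⟩
    exact ⟨hd, fun i j hij =>
      (add_le_add (hdy i) (hdy j)).trans (add_le_of_mem_convexHull_dofVertices hM hy hij)⟩
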